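/- Let [σ₁|τ₁] ∈ B_p and [σ₂|τ₂] ∈ B_q (p,q ≥ 1). If a basis element [σ₃|τ₃] has nonzero coefficient in the product [σ₁|τ₁] ⋆ [σ₂|τ₂] ∈ F_{p+q}, then max τ₃ = max(τ₁ ∪ τ₂) and |τ₃| ≥ |τ₁| + |τ₂| − 1. -/

import Mathlib

open Classical MvPolynomial Finsupp TensorProduct

set_option maxHeartbeats 1600000

noncomputable section

namespace EdgeRes

/-- A "cell" `(σ, τ)`: a pair of finite sets of vertices, representing the symbol `[σ|τ]`. -/
abbrev Cell (n : ℕ) := Finset (Fin n) × Finset (Fin n)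

/-- The cointerval graph of the intervals `[a i, b i]`: distinct vertices are adjacent
iff the corresponding closed intervals are disjoint. -/
def cigraph (n : ℕ) (a b : Fin n → ℝ) : SimpleGraph (Fin n) where
  Adj i j := i ≠ j ∧ Disjoint (Set.Icc (a i) (b i)) (Set.Icc (a j) (b j))
  symm := by refine ⟨?_⟩; intro i j h; exact ⟨h.1.symm, h.2.symm⟩
  loopless := by refine ⟨?_⟩; intro i h; exact h.1 rfl

variable {n : ℕ}

/-- The homological degree of a cell: `|σ| + |τ| - 1`. -/
def cellDeg (e : Cell n) : ℕ := e.1.card + e.2.card - 1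

/-- `e = (σ, τ)` is a basis cell: either the degree-0 cell `(∅, ∅)` (representing `1 ∈ B₀`),
or `σ, τ` are disjoint and nonempty, `max σ < min τ`, and every `i ∈ σ` is adjacent
to `min τ` in `G`. -/
def IsBasisCell (G : SimpleGraph (Fin n)) (e : Cell n) : Prop :=
  e = (∅, ∅) ∨
  (e.1.Nonempty ∧ e.2.Nonempty ∧ Disjoint e.1 e.2 ∧
   (∀ i ∈ e.1, ∀ j ∈ e.2, i < j) ∧
   (∀ i ∈ e.1, ∀ j ∈ e.2, (∀ j' ∈ e.2, j ≤ j') → G.Adj i j))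

/-- `e ∈ B_d`. -/
def InB (G : SimpleGraph (Fin n)) (d : ℕ) (e : Cell n) : Prop :=
  IsBasisCell G e ∧ cellDeg e = d

/-- The underlying module of the resolution: the free `S`-module on all cells (the
resolution `F` is the submodule family spanned by the basis cells of each degree). -/
abbrev Ftot (n : ℕ) (k : Type) [Field k] := Cell n →₀ MvPolynomial (Fin n) k

variable (G : SimpleGraph (Fin n)) (k : Type) [Field k]

/-- The basis vector corresponding to a cell, where symbols that are not genuine
basis elements are interpreted as `0`. -/
def sym (e : Cell n) : Ftot n k :=
  if IsBasisCell G e then Finsupp.single e 1 else 0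

/-- The differential on a basis cell: `d[{i}|{j}] = x_i x_j`, and for `|σ|+|τ| ≥ 3`,
`d[σ|τ] = Σ_{i∈σ} (−1)^{|τ|+|{j∈σ : j>i}|} x_i [σ∖i|τ] + Σ_{i∈τ} (−1)^{|{j∈τ : j>i}|} x_i [σ|τ∖i]`. -/
def diffCell (e : Cell n) : Ftot n k :=
  if IsBasisCell G e then
    if e.1.card + e.2.card = 2 then
      (∏ i ∈ e.1 ∪ e.2, (X i : MvPolynomial (Fin n) k)) • sym G k ((∅, ∅) : Cell n)
    else if 3 ≤ e.1.card + e.2.card then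
      (∑ i ∈ e.1,
        (((-1 : MvPolynomial (Fin n) k) ^ (e.2.card + (e.1.filter fun j => i < j).card)) * X i) •
          sym G k (e.1.erase i, e.2))
      + (∑ i ∈ e.2,
        (((-1 : MvPolynomial (Fin n) k) ^ ((e.2.filter fun j => i < j).card)) * X i) •
          sym G k (e.1, e.2.erase i))
    else 0
  else 0

/-- The differential, as an `S`-linear endomorphism of the total module (it is zero in
degree `0` and on non-basis cells). -/
def Dmap : Ftot n k →ₗ[MvPolynomial (Fin n) k] Ftot n k :=
  Finsupp.lsum ℕ fun e => LinearMap.smulRight LinearMap.id (diffCell G k e)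

/-- The submodule `F_d`: the span of the basis cells in `B_d`.  (`F` is the direct sum of
these, and `F_0 = S·[∅|∅] ≅ S`.) -/
def Fsub (d : ℕ) : Submodule (MvPolynomial (Fin n) k) (Ftot n k) :=
  Submodule.span _ {f : Ftot n k | ∃ e : Cell n, InB G d e ∧ f = Finsupp.single e 1}

/-- The edge ideal `I_G`, generated by the `x_i x_j` for edges `ij` of `G`. -/
def edgeIdeal : Ideal (MvPolynomial (Fin n) k) :=
  Ideal.span {m | ∃ i j : Fin n, G.Adj i j ∧ m = X i * X j}

/-- The irrelevant maximal ideal `(x_1, …, x_n)`. -/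
def irrIdeal (n : ℕ) (k : Type) [Field k] : Ideal (MvPolynomial (Fin n) k) :=
  Ideal.span (Set.range fun i : Fin n => (X i : MvPolynomial (Fin n) k))

/-- The set of pairs `(i, j)` with `i < j`, `ij ∈ E(G)`, and `x_i x_j ∣ x^α`; i.e. the
elements `[{i}|{j}]` of `B₁` whose monomial divides `x^α`. -/
def DvdSet (α : Fin n →₀ ℕ) : Finset (Fin n × Fin n) :=
  Finset.univ.filter fun p => p.1 < p.2 ∧ G.Adj p.1 p.2 ∧ 1 ≤ α p.1 ∧ 1 ≤ α p.2

/-- `c` on a monomial `x^α ∈ F_0 = S`: zero if `x^α ∉ I_G`; otherwise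
`(x^α/(x_i x_j))·[{i}|{j}]` for the `≺`-minimal `[{i}|{j}] ∈ B₁` with `x_i x_j ∣ x^α`
(i.e. `j` is largest possible and then `i` smallest possible). -/
def cZero (α : Fin n →₀ ℕ) : Ftot n k :=
  if h : (DvdSet G α).Nonempty then
    let t := ((DvdSet G α).image Prod.snd).max' (h.image _)
    if h2 : ((((DvdSet G α).filter fun p => p.2 = t)).image Prod.fst).Nonempty then
      let s := ((((DvdSet G α).filter fun p => p.2 = t)).image Prod.fst).min' h2
      (monomial (α - Finsupp.single s 1 - Finsupp.single t 1) (1 : k)) • sym G k ({s}, {t})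
    else 0
  else 0

/-- `C₁ = {i ∈ supp α : i > max τ}`. -/
def C1set (τ : Finset (Fin n)) (α : Fin n →₀ ℕ) : Finset (Fin n) :=
  α.support.filter fun i => ∀ j ∈ τ, j < i

/-- `C₂ = {i ∈ supp α : i < min σ, {i, min τ} ∈ E(G)}`. -/
def C2set (σ τ : Finset (Fin n)) (α : Fin n →₀ ℕ) : Finset (Fin n) :=
  α.support.filter fun i =>
    (∀ s ∈ σ, i < s) ∧ ∀ j ∈ τ, (∀ j' ∈ τ, j ≤ j') → G.Adj i j

/-- `C₃ = {i ∈ supp α : i < min σ, i < max supp α, {i, max supp α} ∈ E(G)}`. -/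
def C3set (σ : Finset (Fin n)) (α : Fin n →₀ ℕ) : Finset (Fin n) :=
  α.support.filter fun i =>
    (∀ s ∈ σ, i < s) ∧ ∀ m ∈ α.support, (∀ m' ∈ α.support, m' ≤ m) → (i < m ∧ G.Adj i m)

/-- The value of the contracting homotopy `c` on the `k`-basis vector `x^α·e`. -/
def cMono (e : Cell n) (α : Fin n →₀ ℕ) : Ftot n k :=
  if IsBasisCell G e then
    if hτ : e.2.Nonempty then
      if e.2.card = 1 then
        -- `τ = {t}`
        let t := e.2.max' hτ
        if h1 : (C1set e.2 α).Nonempty then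
          let m1 := (C1set e.2 α).max' h1
          (monomial (α - Finsupp.single m1 1) (1 : k)) • sym G k (e.1, insert m1 e.2)
          + (if h3 : (C3set G e.1 α).Nonempty then
              let m3 := (C3set G e.1 α).min' h3
              ((-1 : MvPolynomial (Fin n) k) ^ (e.1.card + 1)) •
                ((monomial (α + Finsupp.single t 1 - Finsupp.single m1 1 - Finsupp.single m3 1)
                    (1 : k)) • sym G k (insert m3 e.1, ({m1} : Finset (Fin n))))
            else 0)
        else
          if h2 : (C2set G e.1 e.2 α).Nonempty then
            let m2 := (C2set G e.1 e.2 α).min' h2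
            ((-1 : MvPolynomial (Fin n) k) ^ (e.1.card + 1)) •
              ((monomial (α - Finsupp.single m2 1) (1 : k)) • sym G k (insert m2 e.1, e.2))
          else 0
      else
        -- `|τ| ≥ 2`
        if h1 : (C1set e.2 α).Nonempty then
          let m1 := (C1set e.2 α).max' h1
          (monomial (α - Finsupp.single m1 1) (1 : k)) • sym G k (e.1, insert m1 e.2)
        else 0
    else cZero G k α  -- the degree-0 basis cell `(∅, ∅)`
  else 0

/-- The `k`-basis of the total module, indexed by pairs (cell, monomial exponent). -/
def FBasis (n : ℕ) (k : Type) [Field k] :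
    Module.Basis ((_ : Cell n) × (Fin n →₀ ℕ)) k (Ftot n k) :=
  Finsupp.basis fun _ => MvPolynomial.basisMonomials (Fin n) k

/-- The contracting homotopy `c`, as a `k`-linear endomorphism of the total module. -/
def Cmap : Ftot n k →ₗ[k] Ftot n k :=
  (FBasis n k).constr ℕ fun p => cMono G k p.1 p.2

/-- The `S`-bilinear extension of a map defined on pairs of cells. -/
def biext (b : Cell n → Cell n → Ftot n k) (f g : Ftot n k) : Ftot n k :=
  ∑ e₁ ∈ f.support, ∑ e₂ ∈ g.support, (f e₁ * g e₂) • b e₁ e₂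

/-- The product of two basis cells, defined recursively (with fuel, which suffices as each
recursive step lowers the total degree): `1 ⋆ 1 = 1`, and for `p + q ≥ 1`,
`e₁ ⋆ e₂ = c((d e₁) ⋆ e₂) + (−1)^p c(e₁ ⋆ (d e₂))`. -/
def bstar : ℕ → Cell n → Cell n → Ftot n k
  | 0, _, _ => 0
  | N + 1, e₁, e₂ =>
    if cellDeg e₁ + cellDeg e₂ = 0 then Finsupp.single ((∅, ∅) : Cell n) 1
    else
      Cmap G k (biext k (fun a b => bstar N a b) (Dmap G k (Finsupp.single e₁ 1)) (Finsupp.single e₂ 1))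
      + ((-1 : MvPolynomial (Fin n) k) ^ cellDeg e₁) •
          Cmap G k (biext k (fun a b => bstar N a b) (Finsupp.single e₁ 1) (Dmap G k (Finsupp.single e₂ 1)))

/-- The product `⋆` on the resolution, extended `S`-bilinearly from basis cells. -/
def pstar (f g : Ftot n k) : Ftot n k := biext k (bstar G k (4 * n + 4)) f g

/-- The map `∂` on a basis cell: `∂[{i}|{j}] = x_i x_j`, and for `|σ|+|τ| ≥ 3`,
`∂[σ|τ] = x_{max τ}[σ|τ∖max τ] − (−1)^{|τ|+|σ|} x_{min σ}[σ∖min σ|τ]`. -/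
def partialCell (e : Cell n) : Ftot n k :=
  if IsBasisCell G e then
    if e.1.card + e.2.card = 2 then
      (∏ i ∈ e.1 ∪ e.2, (X i : MvPolynomial (Fin n) k)) • sym G k ((∅, ∅) : Cell n)
    else if 3 ≤ e.1.card + e.2.card then
      if h1 : e.1.Nonempty then
        if h2 : e.2.Nonempty then
          (X (e.2.max' h2) : MvPolynomial (Fin n) k) • sym G k (e.1, e.2.erase (e.2.max' h2))
          - ((-1 : MvPolynomial (Fin n) k) ^ (e.2.card + e.1.card)) •
              ((X (e.1.min' h1) : MvPolynomial (Fin n) k) •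
                sym G k (e.1.erase (e.1.min' h1), e.2))
        else 0
      else 0
    else 0
  else 0

/-- The map `∂`, as an `S`-linear endomorphism of the total module. -/
def Pmap : Ftot n k →ₗ[MvPolynomial (Fin n) k] Ftot n k :=
  Finsupp.lsum ℕ fun e => LinearMap.smulRight LinearMap.id (partialCell G k e)

/-- The `k`-linear projection `π` of `S` fixing each monomial not in `I_G` and
annihilating each monomial in `I_G`. -/
def piMap : MvPolynomial (Fin n) k →ₗ[k] MvPolynomial (Fin n) k :=
  (MvPolynomial.basisMonomials (Fin n) k).constr ℕ fun α =>
    if monomial α (1 : k) ∈ edgeIdeal G k then 0 else monomial α (1 : k)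

/-- The `ℕⁿ`-multidegree of the basis vector `x^α [σ|τ]`: `α + Σ_{i ∈ σ∪τ} eᵢ`. -/
def mdeg (e : Cell n) (α : Fin n →₀ ℕ) : Fin n →₀ ℕ :=
  α + ∑ i ∈ e.1 ∪ e.2, Finsupp.single i 1

/-- The `μ`-homogeneous component of the resolution (as a `k`-subspace). -/
def Hsub (μ : Fin n →₀ ℕ) : Submodule k (Ftot n k) :=
  Submodule.span k {f : Ftot n k |
    ∃ (e : Cell n) (α : Fin n →₀ ℕ), IsBasisCell G e ∧ mdeg e α = μ ∧
      f = Finsupp.single e (monomial α (1 : k))}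

end EdgeRes

/-!
Unwinding the recursion, every term of `e₁ ⋆ e₂` is a term of `c(x^β x^δ e')`, where `x^β e₁'`
is a term of `d e₁` and `x^δ e'` a term of `e₁' ⋆ e₂` (or symmetrically). Along this recursion
the terms keep a controlled shape (`IsProductTerm`): their monomial has no variable beyond
`max τ`, and, when `|τ| = 1`, none before `min σ`. So when `d` has removed `u` from `σ₁` or
`τ₁`, the sets `C₁`, `C₂`, `C₃` can only pick `u`, and `c` puts `u` back where it was: `τ` never
loses an element, and its maximum stays `max (τ₁ ∪ τ₂)`. The exception is the base step
`[{s}|{t}] ⋆ e₂` (where `1 ⋆ e₂ = e₂` because `c ∘ d` is the identity on basis elements):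
there `c` may replace `τ₂ = {t₂}` by `{t}` with `t > t₂`, and the cointerval property, that
the neighbours of `s` to its right form an up-set, makes the branch `C₂` add `s` to `σ` rather
than `t`.
-/

namespace MvPolynomial

variable {σ R : Type*}

theorem coeff_neg_one_pow_mul [CommRing R] (m : ℕ) (p : MvPolynomial σ R) (α : σ →₀ ℕ) :
    coeff α ((-1) ^ m * p) = (-1) ^ m * coeff α p := by
  rw [show ((-1) ^ m : MvPolynomial σ R) = C ((-1) ^ m) by simp, coeff_C_mul]

theorem coeff_ne_zero_of_neg_one_pow_mul [CommRing R] {m : ℕ} {p : MvPolynomial σ R}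
    {α : σ →₀ ℕ} (h : coeff α ((-1) ^ m * p) ≠ 0) : coeff α p ≠ 0 := by
  rwa [coeff_neg_one_pow_mul, Ne, neg_one_pow_mul_eq_zero_iff] at h

theorem eq_of_coeff_monomial_ne_zero [CommSemiring R] {α β : σ →₀ ℕ}
    (h : coeff α (monomial β (1 : R)) ≠ 0) : α = β := by
  rw [coeff_monomial] at h
  exact (of_not_not fun hne => h (if_neg hne)).symm

theorem exists_add_eq_of_coeff_mul_ne_zero [CommSemiring R] {p q : MvPolynomial σ R}
    {α : σ →₀ ℕ} (h : coeff α (p * q) ≠ 0) :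
    ∃ β γ, β + γ = α ∧ coeff β p ≠ 0 ∧ coeff γ q ≠ 0 := by
  obtain ⟨β, hβ, γ, hγ, rfl⟩ := Finset.mem_add.mp (support_mul p q (mem_support_iff.mpr h))
  exact ⟨β, γ, rfl, mem_support_iff.mp hβ, mem_support_iff.mp hγ⟩

end MvPolynomial

theorem ne_zero_or_ne_zero_of_add_ne_zero {M : Type*} [AddZeroClass M] {a b : M}
    (h : a + b ≠ 0) : a ≠ 0 ∨ b ≠ 0 :=
  not_and_or.mp fun hab => h (by rw [hab.1, hab.2, add_zero])

theorem Finset.exists_le_of_max_eq {α : Type*} [LinearOrder α] {s t : Finset α}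
    (h : s.max = t.max) {x : α} (hx : x ∈ t) : ∃ y ∈ s, x ≤ y := by
  obtain ⟨y, hy⟩ := Finset.max_of_mem hx
  exact ⟨y, Finset.mem_of_max (h.trans hy), Finset.le_max_of_eq hx hy⟩

theorem Finsupp.eq_of_mem_support_single_one {ι : Type*} {u i : ι}
    (h : i ∈ (Finsupp.single u 1 : ι →₀ ℕ).support) : i = u := by
  simpa [eq_comm] using h

theorem Finsupp.mem_support_single_one_add {ι : Type*} {u i : ι} {δ : ι →₀ ℕ} :
    i ∈ (Finsupp.single u 1 + δ).support ↔ i = u ∨ i ∈ δ.support := by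
  simp [Finsupp.support_add_eq_union, eq_comm]

namespace EdgeRes

variable {n : ℕ} {G : SimpleGraph (Fin n)} {k : Type} [Field k]

theorem cigraph_adj_of_le {a b : Fin n → ℝ} (hab : ∀ i, a i ≤ b i)
    (hmono : ∀ i j : Fin n, i < j → a i ≤ a j) ⦃i j l : Fin n⦄
    (hadj : (cigraph n a b).Adj i j) (hij : i < j) (hjl : j ≤ l) :
    (cigraph n a b).Adj i l := by
  have hbi : b i < a j := by
    by_contra! hcon
    exact Set.disjoint_left.mp hadj.2 ⟨hmono i j hij, hcon⟩ ⟨le_rfl, hab j⟩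
  have hal : a j ≤ a l := hjl.eq_or_lt.elim (fun h => h ▸ le_rfl) (hmono j l)
  refine ⟨(hij.trans_le hjl).ne, Set.disjoint_left.mpr fun x hx hx' => ?_⟩
  exact absurd (hx.2.trans_lt (hbi.trans_le hal)) (not_lt.mpr hx'.1)

namespace IsBasisCell

variable {e : Cell n} {i j : Fin n}

theorem lt (he : IsBasisCell G e) (hi : i ∈ e.1) (hj : j ∈ e.2) : i < j := by
  rcases he with rfl | he
  · simp at hi
  · exact he.2.2.2.1 i hi j hj

theorem adj (he : IsBasisCell G e) (hi : i ∈ e.1) (hj : j ∈ e.2)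
    (hmin : ∀ j' ∈ e.2, j ≤ j') : G.Adj i j := by
  rcases he with rfl | he
  · simp at hi
  · exact he.2.2.2.2 i hi j hj hmin

theorem snd_nonempty (he : IsBasisCell G e) (h : e.1.Nonempty) : e.2.Nonempty := by
  rcases he with rfl | he
  · simp at h
  · exact he.2.1

theorem fst_nonempty (he : IsBasisCell G e) (h : e.2.Nonempty) : e.1.Nonempty := by
  rcases he with rfl | he
  · simp at h
  · exact he.1

theorem eq_unit_of_cellDeg_eq_zero (he : IsBasisCell G e) (hd : cellDeg e = 0) :
    e = (∅, ∅) := by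
  rcases he with he | he
  · exact he
  · have := he.1.card_pos; have := he.2.1.card_pos
    unfold cellDeg at hd; omega

theorem exists_eq_pair (he : IsBasisCell G e) (h : e.1.card + e.2.card = 2) :
    ∃ s t, s < t ∧ e = ({s}, {t}) := by
  have hcard : e.1.card = 1 ∧ e.2.card = 1 := by
    rcases he with rfl | he
    · simp at h
    · have := he.1.card_pos; have := he.2.1.card_pos; omega
  obtain ⟨s, hs⟩ := Finset.card_eq_one.mp hcard.1
  obtain ⟨t, ht⟩ := Finset.card_eq_one.mp hcard.2
  exact ⟨s, t, he.lt (by simp [hs]) (by simp [ht]), Prod.ext hs ht⟩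

end IsBasisCell

theorem InB.snd_nonempty {d : ℕ} {e : Cell n} (h : InB G d e) (hd : 1 ≤ d) : e.2.Nonempty := by
  rcases h with ⟨rfl | he, rfl⟩
  · simp [cellDeg] at hd
  · exact he.2.1

theorem cellDeg_pos {e : Cell n} (h₁ : e.1.Nonempty) (h₂ : e.2.Nonempty) : 0 < cellDeg e := by
  have := h₁.card_pos; have := h₂.card_pos
  unfold cellDeg; omega

theorem coeff_smul_sym_ne_zero {P : MvPolynomial (Fin n) k} {c e : Cell n} {α : Fin n →₀ ℕ}
    (h : coeff α ((P • sym G k c) e) ≠ 0) : IsBasisCell G c ∧ e = c ∧ coeff α P ≠ 0 := by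
  unfold sym at h
  split_ifs at h with hc
  · rw [Finsupp.smul_apply, Finsupp.single_apply, smul_eq_mul] at h
    split_ifs at h with he
    · exact ⟨hc, he.symm, by rwa [mul_one] at h⟩
    · simp at h
  · simp at h

/-- `x^β e'` is a term of `d e`. -/
inductive DiffTerm (e : Cell n) : Cell n → (Fin n →₀ ℕ) → Prop
  | unit {s t : Fin n} : e = ({s}, {t}) →
      DiffTerm e (∅, ∅) (Finsupp.single s 1 + Finsupp.single t 1)
  | eraseFst {i : Fin n} : i ∈ e.1 → DiffTerm e (e.1.erase i, e.2) (Finsupp.single i 1)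
  | eraseSnd {i : Fin n} : i ∈ e.2 → DiffTerm e (e.1, e.2.erase i) (Finsupp.single i 1)

theorem diffTerm_of_coeff_ne_zero {e e' : Cell n} {β : Fin n →₀ ℕ}
    (h : coeff β (diffCell G k e e') ≠ 0) : IsBasisCell G e' ∧ DiffTerm e e' β := by
  unfold diffCell at h
  split_ifs at h with he h2 h3
  · obtain ⟨s, t, hst, rfl⟩ := he.exists_eq_pair h2
    dsimp only at h
    rw [Finset.prod_union (by simpa using hst.ne), Finset.prod_singleton, Finset.prod_singleton,
      X, X, monomial_mul, one_mul] at h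
    obtain ⟨he', rfl, hβ⟩ := coeff_smul_sym_ne_zero h
    exact eq_of_coeff_monomial_ne_zero hβ ▸ ⟨he', .unit rfl⟩
  · rw [Finsupp.add_apply, coeff_add] at h
    obtain h | h := ne_zero_or_ne_zero_of_add_ne_zero h
    all_goals
      rw [Finsupp.finsetSum_apply, coeff_sum] at h
      obtain ⟨i, hi, h⟩ := Finset.exists_ne_zero_of_sum_ne_zero h
      obtain ⟨he', rfl, hβ⟩ := coeff_smul_sym_ne_zero h
      have hβ := coeff_ne_zero_of_neg_one_pow_mul hβ
      rw [coeff_X, ite_ne_right_iff] at hβ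
      rw [← hβ.1]
    · exact ⟨he', .eraseFst hi⟩
    · exact ⟨he', .eraseSnd hi⟩
  all_goals simp at h

theorem mem_C1set {τ : Finset (Fin n)} {α : Fin n →₀ ℕ} {i : Fin n} :
    i ∈ C1set τ α ↔ i ∈ α.support ∧ ∀ j ∈ τ, j < i := by
  simp [C1set]

theorem mem_C2set {σ τ : Finset (Fin n)} {α : Fin n →₀ ℕ} {i : Fin n} :
    i ∈ C2set G σ τ α ↔
      i ∈ α.support ∧ (∀ s ∈ σ, i < s) ∧ ∀ j ∈ τ, (∀ j' ∈ τ, j ≤ j') → G.Adj i j := by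
  simp [C2set]

theorem mem_C3set {σ : Finset (Fin n)} {α : Fin n →₀ ℕ} {i : Fin n} :
    i ∈ C3set G σ α ↔ i ∈ α.support ∧ (∀ s ∈ σ, i < s) ∧
      ∀ m ∈ α.support, (∀ m' ∈ α.support, m' ≤ m) → i < m ∧ G.Adj i m := by
  simp [C3set]

theorem notMem_C1set_of_le {τ : Finset (Fin n)} {α : Fin n →₀ ℕ} {i j : Fin n} (hj : j ∈ τ)
    (hij : i ≤ j) : i ∉ C1set τ α :=
  fun hi => (mem_C1set.mp hi).2 j hj |>.not_ge hij

theorem notMem_C2set_of_le {σ τ : Finset (Fin n)} {α : Fin n →₀ ℕ} {i s : Fin n} (hs : s ∈ σ)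
    (hsi : s ≤ i) : i ∉ C2set G σ τ α :=
  fun hi => (mem_C2set.mp hi).2.1 s hs |>.not_ge hsi

theorem notMem_C3set_of_le {σ : Finset (Fin n)} {α : Fin n →₀ ℕ} {i s : Fin n} (hs : s ∈ σ)
    (hsi : s ≤ i) : i ∉ C3set G σ α :=
  fun hi => (mem_C3set.mp hi).2.1 s hs |>.not_ge hsi

/-- `x^α₃ e₃` is a term of `c(x^α e)`, for a cell `e` with `τ ≠ ∅`. -/
inductive HomotopyTerm (G : SimpleGraph (Fin n)) (e : Cell n) (α : Fin n →₀ ℕ) :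
    Cell n → (Fin n →₀ ℕ) → Prop
  | extendSnd {m₁ : Fin n} : IsGreatest (C1set e.2 α : Set (Fin n)) m₁ →
      HomotopyTerm G e α (e.1, insert m₁ e.2) (α - Finsupp.single m₁ 1)
  | exchange {t m₁ m₃ : Fin n} : e.2 = {t} → IsGreatest (C1set e.2 α : Set (Fin n)) m₁ →
      IsLeast (C3set G e.1 α : Set (Fin n)) m₃ →
      HomotopyTerm G e α (insert m₃ e.1, {m₁})
        (α + Finsupp.single t 1 - Finsupp.single m₁ 1 - Finsupp.single m₃ 1)
  | extendFst {t m₂ : Fin n} : e.2 = {t} → C1set e.2 α = ∅ →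
      IsLeast (C2set G e.1 e.2 α : Set (Fin n)) m₂ →
      HomotopyTerm G e α (insert m₂ e.1, e.2) (α - Finsupp.single m₂ 1)

theorem homotopyTerm_of_coeff_ne_zero {e e₃ : Cell n} {α α₃ : Fin n →₀ ℕ}
    (hτ : e.2.Nonempty) (h : coeff α₃ (cMono G k e α e₃) ≠ 0) : HomotopyTerm G e α e₃ α₃ := by
  have ht : e.2.card = 1 → e.2 = {e.2.max' hτ} := fun hcard => by
    obtain ⟨t, ht⟩ := Finset.card_eq_one.mp hcard
    simp only [ht, Finset.max'_singleton]
  unfold cMono at h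
  dsimp only at h
  split_ifs at h with he hcard h₁ h₃ h₂ h₁
  · rw [Finsupp.add_apply, coeff_add] at h
    obtain h | h := ne_zero_or_ne_zero_of_add_ne_zero h
    · obtain ⟨-, rfl, hα⟩ := coeff_smul_sym_ne_zero h
      exact eq_of_coeff_monomial_ne_zero hα ▸ .extendSnd (Finset.isGreatest_max' _ h₁)
    · rw [smul_smul] at h
      obtain ⟨-, rfl, hα⟩ := coeff_smul_sym_ne_zero h
      exact eq_of_coeff_monomial_ne_zero (coeff_ne_zero_of_neg_one_pow_mul hα) ▸
        .exchange (ht hcard) (Finset.isGreatest_max' _ h₁) (Finset.isLeast_min' _ h₃)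
  · rw [add_zero] at h
    obtain ⟨-, rfl, hα⟩ := coeff_smul_sym_ne_zero h
    exact eq_of_coeff_monomial_ne_zero hα ▸ .extendSnd (Finset.isGreatest_max' _ h₁)
  · rw [smul_smul] at h
    obtain ⟨-, rfl, hα⟩ := coeff_smul_sym_ne_zero h
    exact eq_of_coeff_monomial_ne_zero (coeff_ne_zero_of_neg_one_pow_mul hα) ▸
      .extendFst (ht hcard) (Finset.not_nonempty_iff_eq_empty.mp h₁) (Finset.isLeast_min' _ h₂)
  · simp at h
  · obtain ⟨-, rfl, hα⟩ := coeff_smul_sym_ne_zero h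
    exact eq_of_coeff_monomial_ne_zero hα ▸ .extendSnd (Finset.isGreatest_max' _ h₁)
  all_goals simp at h

theorem exists_of_coeff_Cmap_ne_zero {f : Ftot n k} {e₃ : Cell n} {α₃ : Fin n →₀ ℕ}
    (h : coeff α₃ (Cmap G k f e₃) ≠ 0) :
    ∃ e α, coeff α (f e) ≠ 0 ∧ coeff α₃ (cMono G k e α e₃) ≠ 0 := by
  rw [Cmap, Module.Basis.constr_apply, Finsupp.sum, Finsupp.finsetSum_apply, coeff_sum] at h
  obtain ⟨⟨e, α⟩, -, h⟩ := Finset.exists_ne_zero_of_sum_ne_zero h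
  rw [Finsupp.smul_apply, coeff_smul, smul_eq_mul] at h
  exact ⟨e, α, left_ne_zero_of_mul h, right_ne_zero_of_mul h⟩

theorem exists_of_coeff_biext_ne_zero {b : Cell n → Cell n → Ftot n k} {f g : Ftot n k}
    {e : Cell n} {α : Fin n →₀ ℕ} (h : coeff α (biext k b f g e) ≠ 0) :
    ∃ e₁ e₂ β γ δ, β + γ + δ = α ∧ coeff β (f e₁) ≠ 0 ∧ coeff γ (g e₂) ≠ 0 ∧
      coeff δ (b e₁ e₂ e) ≠ 0 := by
  rw [biext, Finsupp.finsetSum_apply, coeff_sum] at h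
  obtain ⟨e₁, -, h⟩ := Finset.exists_ne_zero_of_sum_ne_zero h
  rw [Finsupp.finsetSum_apply, coeff_sum] at h
  obtain ⟨e₂, -, h⟩ := Finset.exists_ne_zero_of_sum_ne_zero h
  rw [Finsupp.smul_apply, smul_eq_mul] at h
  obtain ⟨βγ, δ, rfl, hfg, hb⟩ := exists_add_eq_of_coeff_mul_ne_zero h
  obtain ⟨β, γ, rfl, hf, hg⟩ := exists_add_eq_of_coeff_mul_ne_zero hfg
  exact ⟨e₁, e₂, β, γ, δ, rfl, hf, hg, hb⟩

theorem eq_of_coeff_single_one_ne_zero {e e' : Cell n} {γ : Fin n →₀ ℕ}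
    (h : coeff γ (Finsupp.single e (1 : MvPolynomial (Fin n) k) e') ≠ 0) : e' = e ∧ γ = 0 := by
  rw [Finsupp.single_apply] at h
  split_ifs at h with he
  · exact ⟨he.symm, by simpa [coeff_one, eq_comm] using h⟩
  · simp at h

theorem Dmap_single (e : Cell n) : Dmap G k (Finsupp.single e 1) = diffCell G k e := by
  simp [Dmap]

theorem pstar_single (e₁ e₂ : Cell n) :
    pstar G k (Finsupp.single e₁ 1) (Finsupp.single e₂ 1) = bstar G k (4 * n + 4) e₁ e₂ := by
  simp [pstar, biext]

theorem coeff_bstar_succ_ne_zero {N : ℕ} {e₁ e₂ e₃ : Cell n} {α₃ : Fin n →₀ ℕ}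
    (hd : cellDeg e₁ + cellDeg e₂ ≠ 0) (h : coeff α₃ (bstar G k (N + 1) e₁ e₂ e₃) ≠ 0) :
    (∃ e₁' e' β δ, IsBasisCell G e₁' ∧ DiffTerm e₁ e₁' β ∧
      coeff δ (bstar G k N e₁' e₂ e') ≠ 0 ∧ coeff α₃ (cMono G k e' (β + δ) e₃) ≠ 0) ∨
    (∃ e₂' e' γ δ, IsBasisCell G e₂' ∧ DiffTerm e₂ e₂' γ ∧
      coeff δ (bstar G k N e₁ e₂' e') ≠ 0 ∧ coeff α₃ (cMono G k e' (γ + δ) e₃) ≠ 0) := by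
  rw [bstar, if_neg hd, Finsupp.add_apply, coeff_add] at h
  obtain h | h := ne_zero_or_ne_zero_of_add_ne_zero h
  · left
    obtain ⟨e', α, hα, hc⟩ := exists_of_coeff_Cmap_ne_zero h
    obtain ⟨e₁', e₂', β, γ, δ, rfl, hβ, hγ, hδ⟩ := exists_of_coeff_biext_ne_zero hα
    rw [Dmap_single] at hβ
    obtain ⟨rfl, rfl⟩ := eq_of_coeff_single_one_ne_zero hγ
    obtain ⟨hb, hd⟩ := diffTerm_of_coeff_ne_zero hβ
    exact ⟨e₁', e', β, δ, hb, hd, hδ, by simpa using hc⟩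
  · right
    rw [Finsupp.smul_apply, smul_eq_mul] at h
    obtain ⟨e', α, hα, hc⟩ := exists_of_coeff_Cmap_ne_zero
      (coeff_ne_zero_of_neg_one_pow_mul h)
    obtain ⟨e₁', e₂', β, γ, δ, rfl, hβ, hγ, hδ⟩ := exists_of_coeff_biext_ne_zero hα
    rw [Dmap_single] at hγ
    obtain ⟨rfl, rfl⟩ := eq_of_coeff_single_one_ne_zero hβ
    obtain ⟨hb, hd⟩ := diffTerm_of_coeff_ne_zero hγ
    exact ⟨e₂', e', γ, δ, hb, hd, hδ, by simpa using hc⟩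

theorem cMono_unit (α : Fin n →₀ ℕ) : cMono G k (∅, ∅) α = cZero G k α := by
  simp [cMono, IsBasisCell]

theorem eq_of_coeff_cZero_pair_ne_zero {s t : Fin n} (hst : s < t) {e₃ : Cell n}
    {α₃ : Fin n →₀ ℕ}
    (h : coeff α₃ (cZero G k (Finsupp.single s 1 + Finsupp.single t 1) e₃) ≠ 0) :
    e₃ = ({s}, {t}) ∧ α₃ = 0 := by
  have hsupp : ∀ x, 1 ≤ (Finsupp.single s 1 + Finsupp.single t 1 : Fin n →₀ ℕ) x →
      x = s ∨ x = t := by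
    intro x hx
    by_contra! hne
    simp [Ne.symm hne.1, Ne.symm hne.2] at hx
  unfold cZero at h
  dsimp only at h
  split_ifs at h with h₁ h₂
  · obtain ⟨-, rfl, hα⟩ := coeff_smul_sym_ne_zero h
    obtain ⟨⟨s', t'⟩, hp, hs'⟩ := Finset.mem_image.mp (Finset.min'_mem _ h₂)
    obtain ⟨hp, ht'⟩ := Finset.mem_filter.mp hp
    simp only [DvdSet, Finset.mem_filter, Finset.mem_univ, true_and] at hp
    obtain ⟨hlt, -, hs₁, ht₁⟩ := hp
    obtain ⟨rfl, rfl⟩ : s' = s ∧ t' = t := by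
      rcases hsupp s' hs₁ with rfl | rfl <;> rcases hsupp t' ht₁ with rfl | rfl
      all_goals first | exact ⟨rfl, rfl⟩ | exact absurd hlt (by simp [hst.le])
    dsimp only at hs' ht'
    rw [← hs', ← ht'] at hα ⊢
    exact ⟨rfl, by simpa using eq_of_coeff_monomial_ne_zero hα⟩
  all_goals simp at h

theorem eq_of_coeff_cMono_of_diffTerm {e e' e₃ : Cell n} {β α₃ : Fin n →₀ ℕ}
    (he : IsBasisCell G e) (hd : DiffTerm e e' β) (he' : IsBasisCell G e')
    (h : coeff α₃ (cMono G k e' β e₃) ≠ 0) : e₃ = e ∧ α₃ = 0 := by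
  cases hd with
  | unit hpair =>
    subst hpair
    rw [cMono_unit] at h
    exact eq_of_coeff_cZero_pair_ne_zero (he.lt (by simp) (by simp)) h
  | @eraseFst u hu =>
    obtain ⟨t, ht⟩ := he.snd_nonempty ⟨u, hu⟩
    have hC₁ : ∀ m, m ∉ C1set e.2 (Finsupp.single u 1) := fun m hm => by
      obtain rfl := Finsupp.eq_of_mem_support_single_one (mem_C1set.mp hm).1
      exact notMem_C1set_of_le ht (he.lt hu ht).le hm
    cases homotopyTerm_of_coeff_ne_zero (e := (e.1.erase u, e.2)) ⟨t, ht⟩ h with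
    | extendSnd hm₁ => exact absurd hm₁.1 (hC₁ _)
    | exchange _ hm₁ => exact absurd hm₁.1 (hC₁ _)
    | extendFst _ _ hm₂ =>
      obtain rfl := Finsupp.eq_of_mem_support_single_one (mem_C2set.mp hm₂.1).1
      exact ⟨Prod.ext (Finset.insert_erase hu) rfl, tsub_self _⟩
  | @eraseSnd u hu =>
    obtain ⟨w, hw⟩ := he.fst_nonempty ⟨u, hu⟩
    cases homotopyTerm_of_coeff_ne_zero (he'.snd_nonempty ⟨w, hw⟩) h with
    | extendSnd hm₁ =>
      obtain rfl := Finsupp.eq_of_mem_support_single_one (mem_C1set.mp hm₁.1).1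
      exact ⟨Prod.ext rfl (Finset.insert_erase hu), tsub_self _⟩
    | exchange _ _ hm₃ =>
      obtain rfl := Finsupp.eq_of_mem_support_single_one (mem_C3set.mp hm₃.1).1
      exact absurd hm₃.1 (notMem_C3set_of_le hw (he.lt hw hu).le)
    | extendFst _ _ hm₂ =>
      obtain rfl := Finsupp.eq_of_mem_support_single_one (mem_C2set.mp hm₂.1).1
      exact absurd hm₂.1 (notMem_C2set_of_le hw (he.lt hw hu).le)

theorem not_diffTerm_unit {e' : Cell n} {β : Fin n →₀ ℕ} : ¬DiffTerm ((∅, ∅) : Cell n) e' β := by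
  rintro (h | h | h) <;> simp at h

theorem eq_of_coeff_bstar_unit_left_ne_zero (N : ℕ) {e e₃ : Cell n} {α₃ : Fin n →₀ ℕ}
    (he : IsBasisCell G e) (h : coeff α₃ (bstar G k N (∅, ∅) e e₃) ≠ 0) : e₃ = e ∧ α₃ = 0 := by
  induction N generalizing e e₃ α₃ with
  | zero => simp [bstar] at h
  | succ N ih =>
    by_cases hd : cellDeg ((∅, ∅) : Cell n) + cellDeg e = 0
    · rw [bstar, if_pos hd] at h
      obtain ⟨rfl, rfl⟩ := eq_of_coeff_single_one_ne_zero h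
      exact ⟨(he.eq_unit_of_cellDeg_eq_zero (by simpa [cellDeg] using hd)).symm, rfl⟩
    · rcases coeff_bstar_succ_ne_zero hd h with ⟨_, _, _, _, -, hd', -⟩ |
        ⟨e', _, γ, δ, he', hd', hδ, hc⟩
      · exact absurd hd' not_diffTerm_unit
      · obtain ⟨rfl, rfl⟩ := ih he' hδ
        exact eq_of_coeff_cMono_of_diffTerm he hd' he' (by simpa using hc)

theorem eq_of_coeff_bstar_unit_right_ne_zero (N : ℕ) {e e₃ : Cell n} {α₃ : Fin n →₀ ℕ}
    (he : IsBasisCell G e) (h : coeff α₃ (bstar G k N e (∅, ∅) e₃) ≠ 0) : e₃ = e ∧ α₃ = 0 := by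
  induction N generalizing e e₃ α₃ with
  | zero => simp [bstar] at h
  | succ N ih =>
    by_cases hd : cellDeg e + cellDeg ((∅, ∅) : Cell n) = 0
    · rw [bstar, if_pos hd] at h
      obtain ⟨rfl, rfl⟩ := eq_of_coeff_single_one_ne_zero h
      exact ⟨(he.eq_unit_of_cellDeg_eq_zero (by simpa [cellDeg] using hd)).symm, rfl⟩
    · rcases coeff_bstar_succ_ne_zero hd h with ⟨e', _, β, δ, he', hd', hδ, hc⟩ |
        ⟨_, _, _, _, -, hd', -⟩
      · obtain ⟨rfl, rfl⟩ := ih he' hδ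
        exact eq_of_coeff_cMono_of_diffTerm he hd' he' (by simpa using hc)
      · exact absurd hd' not_diffTerm_unit

structure IsProductTerm (e₁ e₂ e₃ : Cell n) (α₃ : Fin n →₀ ℕ) : Prop where
  snd_nonempty : e₃.2.Nonempty
  max_snd : e₃.2.max = (e₁.2 ∪ e₂.2).max
  card_snd : e₁.2.card + e₂.2.card - 1 ≤ e₃.2.card
  support_le : ∀ i ∈ α₃.support, ∃ j ∈ e₃.2, i ≤ j
  /-- The second part keeps a variable `x_u` with `u ∈ τ₁` (which exceeds an element of `σ₁`)
  from ever lying before `min σ₃`. -/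
  of_card_snd_eq_one : e₃.2.card = 1 →
    (∀ i ∈ α₃.support, ∃ s ∈ e₃.1, s ≤ i) ∧ ∃ s ∈ e₃.1, ∀ v ∈ e₁.1 ∪ e₂.1, s ≤ v

namespace IsProductTerm

variable {e₁ e₂ e e₃ : Cell n} {δ α₃ : Fin n →₀ ℕ} {u : Fin n}

theorem symm (h : IsProductTerm e₁ e₂ e₃ α₃) : IsProductTerm e₂ e₁ e₃ α₃ where
  snd_nonempty := h.snd_nonempty
  max_snd := Finset.union_comm e₂.2 e₁.2 ▸ h.max_snd
  card_snd := Nat.add_comm e₂.2.card e₁.2.card ▸ h.card_snd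
  support_le := h.support_le
  of_card_snd_eq_one := Finset.union_comm e₂.1 e₁.1 ▸ h.of_card_snd_eq_one

theorem of_eraseFst (he₁ : IsBasisCell G e₁) (hu : u ∈ e₁.1)
    (hI : IsProductTerm (e₁.1.erase u, e₁.2) e₂ e δ)
    (h : coeff α₃ (cMono G k e (Finsupp.single u 1 + δ) e₃) ≠ 0) :
    IsProductTerm e₁ e₂ e₃ α₃ := by
  obtain ⟨t, ht⟩ := he₁.snd_nonempty ⟨u, hu⟩
  have hC₁ : ∀ m, m ∉ C1set e.2 (Finsupp.single u 1 + δ) := by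
    intro m hm
    rcases Finsupp.mem_support_single_one_add.mp (mem_C1set.mp hm).1 with rfl | hi
    · obtain ⟨j, hj, htj⟩ :=
        Finset.exists_le_of_max_eq hI.max_snd (Finset.mem_union_left _ ht)
      exact notMem_C1set_of_le hj ((he₁.lt hu ht).le.trans htj) hm
    · obtain ⟨j, hj, hmj⟩ := hI.support_le m hi
      exact notMem_C1set_of_le hj hmj hm
  cases homotopyTerm_of_coeff_ne_zero hI.snd_nonempty h with
  | extendSnd hm₁ => exact absurd hm₁.1 (hC₁ _)
  | exchange _ hm₁ => exact absurd hm₁.1 (hC₁ _)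
  | @extendFst t' m₂ ht' _ hm₂ =>
    obtain ⟨hδ, s₀, hs₀, hs₀le⟩ := hI.of_card_snd_eq_one (by simp [ht'])
    obtain ⟨hm₂, hm₂σ, -⟩ := mem_C2set.mp hm₂.1
    obtain rfl : u = m₂ := by
      rcases Finsupp.mem_support_single_one_add.mp hm₂ with rfl | hi
      · rfl
      · obtain ⟨s, hs, hsm⟩ := hδ m₂ hi
        exact absurd (hm₂σ s hs) hsm.not_gt
    rw [add_tsub_cancel_left]
    refine ⟨hI.snd_nonempty, hI.max_snd, hI.card_snd, hI.support_le, fun _ => ⟨?_, ?_⟩⟩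
    · intro i hi
      obtain ⟨s, hs, hsi⟩ := hδ i hi
      exact ⟨s, Finset.mem_insert_of_mem hs, hsi⟩
    · refine ⟨u, Finset.mem_insert_self _ _, fun v hv => ?_⟩
      by_cases hvu : v = u
      · exact hvu.ge
      · refine (hm₂σ s₀ hs₀).le.trans (hs₀le v ?_)
        simp only [Finset.mem_union, Finset.mem_erase] at hv ⊢
        tauto

theorem of_eraseSnd (he₁ : IsBasisCell G e₁) (hu : u ∈ e₁.2)
    (hI : IsProductTerm (e₁.1, e₁.2.erase u) e₂ e δ)
    (h : coeff α₃ (cMono G k e (Finsupp.single u 1 + δ) e₃) ≠ 0) :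
    IsProductTerm e₁ e₂ e₃ α₃ := by
  obtain ⟨w, hw⟩ := he₁.fst_nonempty ⟨u, hu⟩
  have hge : e.2.card = 1 → ∀ i ∈ (Finsupp.single u 1 + δ).support, ∃ s ∈ e.1, s ≤ i := by
    intro hcard i hi
    obtain ⟨hδ, s₀, hs₀, hs₀le⟩ := hI.of_card_snd_eq_one hcard
    rcases Finsupp.mem_support_single_one_add.mp hi with rfl | hi
    · exact ⟨s₀, hs₀, (hs₀le w (Finset.mem_union_left _ hw)).trans (he₁.lt hw hu).le⟩
    · exact hδ i hi
  cases homotopyTerm_of_coeff_ne_zero hI.snd_nonempty h with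
  | @extendSnd m₁ hm₁ =>
    obtain ⟨hm₁, hm₁τ⟩ := mem_C1set.mp hm₁.1
    obtain rfl : u = m₁ := by
      rcases Finsupp.mem_support_single_one_add.mp hm₁ with rfl | hi
      · rfl
      · obtain ⟨j, hj, hmj⟩ := hI.support_le _ hi
        exact absurd (hm₁τ j hj) hmj.not_gt
    have hcard : (insert u e.2).card = e.2.card + 1 :=
      Finset.card_insert_of_notMem fun h => (hm₁τ u h).false
    rw [add_tsub_cancel_left]
    refine ⟨Finset.insert_nonempty _ _, ?_, ?_, ?_, ?_⟩
    · rw [Finset.max_insert, hI.max_snd, ← Finset.max_insert]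
      dsimp only
      rw [← Finset.insert_union, Finset.insert_erase hu]
    · have := hI.card_snd
      have := Finset.card_erase_of_mem hu
      dsimp only at *
      omega
    · intro i hi
      obtain ⟨j, hj, hij⟩ := hI.support_le i hi
      exact ⟨j, Finset.mem_insert_of_mem hj, hij⟩
    · intro h1
      exact absurd (hcard ▸ h1) (by simpa using hI.snd_nonempty.ne_empty)
  | exchange ht _ hm₃ =>
    obtain ⟨s, hs, hsm⟩ := hge (by simp [ht]) _ (mem_C3set.mp hm₃.1).1
    exact absurd hm₃.1 (notMem_C3set_of_le hs hsm)
  | extendFst ht _ hm₂ =>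
    obtain ⟨s, hs, hsm⟩ := hge (by simp [ht]) _ (mem_C2set.mp hm₂.1).1
    exact absurd hm₂.1 (notMem_C2set_of_le hs hsm)

end IsProductTerm

section Pair

variable {s t : Fin n} {τ : Finset (Fin n)}

theorem mem_support_single_add_single {i : Fin n} :
    i ∈ (Finsupp.single s 1 + Finsupp.single t 1 : Fin n →₀ ℕ).support ↔ i = s ∨ i = t := by
  rw [Finsupp.mem_support_single_one_add]
  exact or_congr_right ⟨Finsupp.eq_of_mem_support_single_one, fun h => by simp [h]⟩

theorem eq_of_isGreatest_C1set_pair (hst : s < t) {m : Fin n}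
    (hm : IsGreatest (C1set τ (Finsupp.single s 1 + Finsupp.single t 1) : Set (Fin n)) m) :
    m = t ∧ ∀ j ∈ τ, j < t := by
  obtain ⟨hmα, hmτ⟩ := mem_C1set.mp hm.1
  rcases mem_support_single_add_single.mp hmα with rfl | rfl
  · have ht : t ∈ C1set τ (Finsupp.single m 1 + Finsupp.single t 1) :=
      mem_C1set.mpr ⟨by simp, fun j hj => (hmτ j hj).trans hst⟩
    exact absurd (hm.2 ht) hst.not_ge
  · exact ⟨rfl, hmτ⟩

theorem IsProductTerm.pair_extendSnd {e₂ : Cell n} (hst : s < t) (hτ : e₂.2.Nonempty)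
    (hlt : ∀ j ∈ e₂.2, j < t) :
    IsProductTerm ({s}, {t}) e₂ (e₂.1, insert t e₂.2)
      (Finsupp.single s 1 + Finsupp.single t 1 - Finsupp.single t 1) := by
  have hcard : (insert t e₂.2).card = e₂.2.card + 1 :=
    Finset.card_insert_of_notMem fun h => (hlt t h).false
  rw [add_tsub_cancel_right]
  refine ⟨Finset.insert_nonempty _ _, by rw [Finset.insert_eq], by simp [hcard], ?_, ?_⟩
  · intro i hi
    exact ⟨t, Finset.mem_insert_self _ _, Finsupp.eq_of_mem_support_single_one hi ▸ hst.le⟩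
  · intro h1
    exact absurd (hcard ▸ h1) (by simpa using hτ.ne_empty)

theorem IsProductTerm.pair_exchange {e₂ : Cell n} {t₂ : Fin n} (ht₂ : e₂.2 = {t₂})
    (ht₂t : t₂ < t) (hst₂ : s ≤ t₂) (hsσ : ∀ v ∈ e₂.1, s < v) :
    IsProductTerm ({s}, {t}) e₂ (insert s e₂.1, {t})
      (Finsupp.single s 1 + Finsupp.single t 1 + Finsupp.single t₂ 1 - Finsupp.single t 1 -
        Finsupp.single s 1) := by
  rw [add_right_comm, add_tsub_cancel_right, add_tsub_cancel_left]
  refine ⟨Finset.singleton_nonempty t, ?_, by simp [ht₂], ?_, fun _ => ⟨?_, ?_⟩⟩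
  · simp [ht₂, ht₂t.le]
  · intro i hi
    exact ⟨t, Finset.mem_singleton_self t, Finsupp.eq_of_mem_support_single_one hi ▸ ht₂t.le⟩
  · intro i hi
    exact ⟨s, Finset.mem_insert_self _ _, Finsupp.eq_of_mem_support_single_one hi ▸ hst₂⟩
  · refine ⟨s, Finset.mem_insert_self _ _, fun v hv => ?_⟩
    rcases Finset.mem_union.mp hv with hv | hv
    · exact (Finset.mem_singleton.mp hv).ge
    · exact (hsσ v hv).le

theorem IsProductTerm.pair_extendFst {e₂ : Cell n} {t₂ : Fin n} (hst : s < t)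
    (ht₂ : e₂.2 = {t₂}) (htt₂ : t ≤ t₂) (hsσ : ∀ v ∈ e₂.1, s < v) :
    IsProductTerm ({s}, {t}) e₂ (insert s e₂.1, e₂.2)
      (Finsupp.single s 1 + Finsupp.single t 1 - Finsupp.single s 1) := by
  rw [add_tsub_cancel_left]
  refine ⟨by simp [ht₂], ?_, by simp [ht₂], ?_, fun _ => ⟨?_, ?_⟩⟩
  · simp [ht₂, htt₂]
  · intro i hi
    exact ⟨t₂, by simp [ht₂], Finsupp.eq_of_mem_support_single_one hi ▸ htt₂⟩
  · intro i hi
    exact ⟨s, Finset.mem_insert_self _ _, Finsupp.eq_of_mem_support_single_one hi ▸ hst.le⟩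
  · refine ⟨s, Finset.mem_insert_self _ _, fun v hv => ?_⟩
    rcases Finset.mem_union.mp hv with hv | hv
    · exact (Finset.mem_singleton.mp hv).ge
    · exact (hsσ v hv).le

end Pair

theorem isProductTerm_pair
    (hG : ∀ ⦃i j l : Fin n⦄, G.Adj i j → i < j → j ≤ l → G.Adj i l) {s t : Fin n}
    (hst : s < t) (hadj : G.Adj s t) {e₂ e₃ : Cell n} {α₃ : Fin n →₀ ℕ}
    (he₂ : IsBasisCell G e₂) (hτ : e₂.2.Nonempty)
    (h : coeff α₃ (cMono G k e₂ (Finsupp.single s 1 + Finsupp.single t 1) e₃) ≠ 0) :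
    IsProductTerm ({s}, {t}) e₂ e₃ α₃ := by
  cases homotopyTerm_of_coeff_ne_zero hτ h with
  | extendSnd hm₁ =>
    obtain ⟨rfl, hlt⟩ := eq_of_isGreatest_C1set_pair hst hm₁
    exact .pair_extendSnd hst hτ hlt
  | @exchange t₂ m₁ m₃ ht₂ hm₁ hm₃ =>
    obtain ⟨hm₁t, hlt⟩ := eq_of_isGreatest_C1set_pair hst hm₁
    subst m₁
    obtain ⟨hm₃α, hm₃σ, hm₃max⟩ := mem_C3set.mp hm₃.1
    have hm₃t : m₃ < t := (hm₃max t (by simp) fun m hm =>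
      (mem_support_single_add_single.mp hm).elim (fun h => h ▸ hst.le) le_of_eq).1
    obtain rfl : m₃ = s := (mem_support_single_add_single.mp hm₃α).resolve_right hm₃t.ne
    obtain ⟨w, hw⟩ := he₂.fst_nonempty hτ
    exact .pair_exchange ht₂ (hlt t₂ (by simp [ht₂]))
      ((hm₃σ w hw).trans (he₂.lt hw (by simp [ht₂]))).le hm₃σ
  | @extendFst t₂ m₂ ht₂ hC₁ hm₂ =>
    have htt₂ : t ≤ t₂ := by
      by_contra! hlt
      have ht : t ∈ C1set e₂.2 (Finsupp.single s 1 + Finsupp.single t 1) :=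
        mem_C1set.mpr ⟨by simp, by simpa [ht₂] using hlt⟩
      simp [hC₁] at ht
    obtain ⟨hm₂α, hm₂σ, -⟩ := mem_C2set.mp hm₂.1
    obtain rfl : m₂ = s := by
      refine (mem_support_single_add_single.mp hm₂α).resolve_right fun hm₂t => ?_
      subst m₂
      -- `s ∈ C₂` as well, since the neighbourhood of `s` to its right is upward closed
      have hs : s ∈ C2set G e₂.1 e₂.2 (Finsupp.single s 1 + Finsupp.single t 1) :=
        mem_C2set.mpr ⟨by simp, fun v hv => hst.trans (hm₂σ v hv), fun j hj _ => by
          rw [ht₂, Finset.mem_singleton] at hj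
          exact hj ▸ hG hadj hst htt₂⟩
      exact absurd (hm₂.2 hs) hst.not_ge
    exact .pair_extendFst hst ht₂ htt₂ hm₂σ

theorem IsProductTerm.of_diffTerm
    (hG : ∀ ⦃i j l : Fin n⦄, G.Adj i j → i < j → j ≤ l → G.Adj i l)
    {e₁ e₂ e₁' e' e₃ : Cell n} {β δ α₃ : Fin n →₀ ℕ} (he₁ : IsBasisCell G e₁)
    (he₂ : IsBasisCell G e₂) (hτ₂ : e₂.2.Nonempty) (hd : DiffTerm e₁ e₁' β)
    (he₁' : IsBasisCell G e₁') (hunit : e₁' = (∅, ∅) → e' = e₂ ∧ δ = 0)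
    (ih : e₁'.2.Nonempty → IsProductTerm e₁' e₂ e' δ)
    (h : coeff α₃ (cMono G k e' (β + δ) e₃) ≠ 0) : IsProductTerm e₁ e₂ e₃ α₃ := by
  cases hd with
  | unit hpair =>
    subst hpair
    obtain ⟨rfl, rfl⟩ := hunit rfl
    exact isProductTerm_pair hG (he₁.lt (by simp) (by simp))
      (he₁.adj (by simp) (by simp) (by simp)) he₂ hτ₂ (by simpa using h)
  | @eraseFst u hu => exact .of_eraseFst he₁ hu (ih (he₁.snd_nonempty ⟨u, hu⟩)) h
  | @eraseSnd u hu =>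
    exact .of_eraseSnd he₁ hu (ih (he₁'.snd_nonempty (he₁.fst_nonempty ⟨u, hu⟩))) h

theorem isProductTerm_of_coeff_bstar_ne_zero
    (hG : ∀ ⦃i j l : Fin n⦄, G.Adj i j → i < j → j ≤ l → G.Adj i l) (N : ℕ)
    {e₁ e₂ e₃ : Cell n} {α₃ : Fin n →₀ ℕ} (he₁ : IsBasisCell G e₁) (he₂ : IsBasisCell G e₂)
    (hτ₁ : e₁.2.Nonempty) (hτ₂ : e₂.2.Nonempty)
    (h : coeff α₃ (bstar G k N e₁ e₂ e₃) ≠ 0) : IsProductTerm e₁ e₂ e₃ α₃ := by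
  induction N generalizing e₁ e₂ e₃ α₃ with
  | zero => simp [bstar] at h
  | succ N ih =>
    have hd : cellDeg e₁ + cellDeg e₂ ≠ 0 := by
      have := cellDeg_pos (he₁.fst_nonempty hτ₁) hτ₁
      omega
    rcases coeff_bstar_succ_ne_zero hd h with ⟨e₁', e', β, δ, he₁', hd₁, hδ, hc⟩ |
      ⟨e₂', e', γ, δ, he₂', hd₂, hδ, hc⟩
    · refine .of_diffTerm hG he₁ he₂ hτ₂ hd₁ he₁' ?_ (fun hτ => ih he₁' he₂ hτ hτ₂ hδ) hc
      rintro rfl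
      exact eq_of_coeff_bstar_unit_left_ne_zero N he₂ hδ
    · refine (IsProductTerm.of_diffTerm hG he₂ he₁ hτ₁ hd₂ he₂' ?_
        (fun hτ => (ih he₁ he₂' hτ₁ hτ hδ).symm) hc).symm
      rintro rfl
      exact eq_of_coeff_bstar_unit_right_ne_zero N he₁ hδ

theorem stmt13_general (n : ℕ) (a b : Fin n → ℝ)
    (hab : ∀ i, a i ≤ b i) (hmono : ∀ i j : Fin n, i < j → a i ≤ a j)
    (k : Type) [Field k]
    (p q : ℕ) (hp : 1 ≤ p) (hq : 1 ≤ q) (e₁ e₂ : Cell n)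
    (h1 : InB (cigraph n a b) p e₁) (h2 : InB (cigraph n a b) q e₂)
    (e₃ : Cell n)
    (hne : pstar (cigraph n a b) k (Finsupp.single e₁ 1) (Finsupp.single e₂ 1) e₃ ≠ 0) :
    e₃.2.max = (e₁.2 ∪ e₂.2).max ∧ e₁.2.card + e₂.2.card - 1 ≤ e₃.2.card := by
  rw [pstar_single] at hne
  obtain ⟨α₃, hα₃⟩ := ne_zero_iff.mp hne
  have h := isProductTerm_of_coeff_bstar_ne_zero (cigraph_adj_of_le hab hmono) _ h1.1 h2.1
    (h1.snd_nonempty hp) (h2.snd_nonempty hq) hα₃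
  exact ⟨h.max_snd, h.card_snd⟩

theorem stmt13 (n : ℕ) (hn : 1 ≤ n) (a b : Fin n → ℝ)
    (hab : ∀ i, a i ≤ b i) (hmono : ∀ i j : Fin n, i < j → a i ≤ a j)
    (k : Type) [Field k]
    (p q : ℕ) (hp : 1 ≤ p) (hq : 1 ≤ q) (e₁ e₂ : Cell n)
    (h1 : InB (cigraph n a b) p e₁) (h2 : InB (cigraph n a b) q e₂)
    (e₃ : Cell n) (h3 : IsBasisCell (cigraph n a b) e₃)
    (hne : pstar (cigraph n a b) k (Finsupp.single e₁ 1) (Finsupp.single e₂ 1) e₃ ≠ 0) :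
    e₃.2.max = (e₁.2 ∪ e₂.2).max ∧ e₁.2.card + e₂.2.card - 1 ≤ e₃.2.card :=
  stmt13_general n a b hab hmono k p q hp hq e₁ e₂ h1 h2 e₃ hne

end EdgeRes
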